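/- arXiv:2507.00973 — 2 statements merged into one kernel-verified Lean document; each statement's English description precedes it below -/
import Mathlib

section
/- The reduction map modulo 3 is injective on any finite subgroup of GL_n(ℤ): if A ∈ GL_n(ℤ) has finite order and A ≡ I (mod 3), then A = I. -/
/-!
If `a = 1 + x` has prime order `p` and `q^k ∣ x` with `k ≥ 1`, expanding `(1 + x)^p = 1`
gives `p x = -∑_{m ≥ 2} C(p, m) x^m`, whose right side is divisible by `q^(k+1)`, and even by
`q^(k+2)` when `p = q` (then `q ∣ C(q, m)` for `m < q`, and `q k ≥ k + 2` because `q` is odd).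
Either way `q^(k+1) ∣ x`, so `x` is divisible by every power of `q`, hence `x = 0`. An element
of finite order other than `1` has a power of prime order, and that power is still `≡ 1 (mod q)`.
-/

open Finset

section Ring

variable {R : Type*} [Ring R]

theorem natCast_pow_add_dvd_mul {q i j : ℕ} {y z : R} (hy : (q : R) ^ i ∣ y)
    (hz : (q : R) ^ j ∣ z) : (q : R) ^ (i + j) ∣ y * z := by
  obtain ⟨y, rfl⟩ := hy
  obtain ⟨z, rfl⟩ := hz
  refine ⟨y * z, ?_⟩
  rw [pow_add, mul_assoc, ← mul_assoc y, ← ((Nat.cast_commute q y).pow_left j).eq, mul_assoc,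
    mul_assoc]

theorem natCast_pow_mul_dvd_pow {q k : ℕ} {x : R} (h : (q : R) ^ k ∣ x) (m : ℕ) :
    (q : R) ^ (k * m) ∣ x ^ m := by
  obtain ⟨y, rfl⟩ := h
  rw [((Nat.cast_commute q y).pow_left k).mul_pow, pow_mul]
  exact dvd_mul_right _ _

theorem natCast_dvd_of_dvd_natCast_mul {a b : ℕ} (hab : a.Coprime b) {x : R}
    (h : (a : R) ∣ b * x) : (a : R) ∣ x := by
  obtain ⟨u, v, huv⟩ := Nat.Coprime.isCoprime hab
  obtain ⟨z, hz⟩ := h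
  refine ⟨u * x + v * z, ?_⟩
  calc x = ((u * a + v * b : ℤ) : R) * x := by rw [huv, Int.cast_one, one_mul]
    _ = a * (u * x + v * z) := by
      push_cast
      rw [add_mul, mul_assoc (v : R), hz, mul_add, ← mul_assoc, ← mul_assoc,
        (Int.cast_commute u (a : R)).eq, (Int.cast_commute v (a : R)).eq, mul_assoc, mul_assoc]

theorem natCast_pow_dvd_of_natCast_pow_succ_dvd_mul [IsAddTorsionFree R] {q k : ℕ} (hq : q ≠ 0)
    {x : R} (h : (q : R) ^ (k + 1) ∣ q * x) : (q : R) ^ k ∣ x := by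
  obtain ⟨z, hz⟩ := h
  refine ⟨z, nsmul_right_injective hq ?_⟩
  simp only [nsmul_eq_mul, hz, pow_succ', mul_assoc]

theorem natCast_mul_eq_neg_sum_of_add_one_pow_eq_one {p : ℕ} (hp : 0 < p) {x : R}
    (h : (x + 1) ^ p = 1) : (p : R) * x = -∑ m ∈ Ico 2 (p + 1), (p.choose m : R) * x ^ m := by
  have hexp := (Commute.one_right x).add_pow p
  rw [h, range_eq_Ico, sum_eq_sum_Ico_succ_bot (by omega),
    sum_eq_sum_Ico_succ_bot (by omega)] at hexp
  simp only [zero_add, one_add_one_eq_two, one_pow, mul_one, pow_zero, pow_one,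
    Nat.choose_zero_right, Nat.choose_one_right, Nat.cast_one, ← Nat.cast_comm] at hexp
  rw [eq_neg_iff_add_eq_zero]
  exact (left_eq_add.1 hexp)

variable [IsAddTorsionFree R] {q : ℕ}

theorem natCast_pow_succ_dvd_of_add_one_pow_prime_eq_one (hq : q.Prime) (hq2 : q ≠ 2) {p : ℕ}
    (hp : p.Prime) {x : R} (hx : (x + 1) ^ p = 1) {k : ℕ} (hk : 1 ≤ k)
    (hqk : (q : R) ^ k ∣ x) : (q : R) ^ (k + 1) ∣ x := by
  have hpx := natCast_mul_eq_neg_sum_of_add_one_pow_eq_one hp.pos hx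
  have hpow : ∀ m, (q : R) ^ (k * m) ∣ x ^ m := natCast_pow_mul_dvd_pow hqk
  by_cases hpq : p = q
  · subst p
    have hq3 : 3 ≤ q := by have := hq.two_le; omega
    refine natCast_pow_dvd_of_natCast_pow_succ_dvd_mul hq.ne_zero
      (hpx ▸ dvd_neg.2 (dvd_sum fun m hm => ?_))
    obtain ⟨hm2, hmq⟩ := mem_Ico.1 hm
    rcases (Nat.lt_succ_iff.1 hmq).lt_or_eq with hmq | hmq
    · have hchoose : (q : R) ^ 1 ∣ (q.choose m : R) := by
        simp only [pow_one]; exact Nat.cast_dvd_cast (hq.dvd_choose_self (by omega) hmq)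
      exact (pow_dvd_pow _ (by nlinarith)).trans (natCast_pow_add_dvd_mul hchoose (hpow m))
    · subst m
      simpa using (pow_dvd_pow _ (by nlinarith)).trans (hpow q)
  · have hcop : (q ^ (k + 1)).Coprime p :=
      ((Nat.coprime_primes hq hp).2 (Ne.symm hpq)).pow_left _
    have hsum : (q : R) ^ (k + 1) ∣ p * x := hpx ▸ dvd_neg.2 (dvd_sum fun m hm =>
      (pow_dvd_pow _ (show k + 1 ≤ 0 + k * m by nlinarith [(mem_Ico.1 hm).1])).trans
        (natCast_pow_add_dvd_mul (by simp) (hpow m)))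
    exact_mod_cast natCast_dvd_of_dvd_natCast_mul hcop (x := x) (by exact_mod_cast hsum)

theorem eq_zero_of_add_one_pow_prime_eq_one (hq : q.Prime) (hq2 : q ≠ 2)
    (hsep : ∀ y : R, (∀ k, (q : R) ^ k ∣ y) → y = 0) {p : ℕ} (hp : p.Prime) {x : R}
    (hx : (x + 1) ^ p = 1) (hqx : (q : R) ∣ x) : x = 0 := by
  have hsucc : ∀ k, (q : R) ^ (k + 1) ∣ x := by
    intro k
    induction k with
    | zero => simpa using hqx
    | succ k ih => exact natCast_pow_succ_dvd_of_add_one_pow_prime_eq_one hq hq2 hp hx (by omega) ih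
  exact hsep x fun k => (pow_dvd_pow _ k.le_succ).trans (hsucc k)

theorem IsOfFinOrder.exists_prime_orderOf_pow {G : Type*} [Monoid G] {a : G} (ha : IsOfFinOrder a)
    (h : a ≠ 1) : ∃ j p, p.Prime ∧ orderOf (a ^ j) = p :=
  ⟨_, _, Nat.minFac_prime (mt orderOf_eq_one_iff.1 h),
    orderOf_pow_orderOf_div ha.orderOf_pos.ne' (Nat.minFac_dvd _)⟩

theorem eq_one_of_isOfFinOrder_of_natCast_dvd_sub_one (hq : q.Prime) (hq2 : q ≠ 2)
    (hsep : ∀ y : R, (∀ k, (q : R) ^ k ∣ y) → y = 0) {a : R} (ha : IsOfFinOrder a)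
    (hqa : (q : R) ∣ a - 1) : a = 1 := by
  by_contra hne
  obtain ⟨j, p, hp, hj⟩ := ha.exists_prime_orderOf_pow hne
  have hqaj : (q : R) ∣ a ^ j - 1 :=
    hqa.trans (by simpa using (Commute.one_right a).sub_dvd_pow_sub_pow j)
  have haj : a ^ j - 1 = 0 := eq_zero_of_add_one_pow_prime_eq_one hq hq2 hsep hp
    (by rw [sub_add_cancel, ← hj, pow_orderOf_eq_one]) hqaj
  rw [sub_eq_zero.1 haj, orderOf_one] at hj
  exact hp.ne_one hj.symm

end Ring

namespace Matrix

instance {m n α : Type*} [AddMonoid α] [IsAddTorsionFree α] : IsAddTorsionFree (Matrix m n α) :=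
  inferInstanceAs (IsAddTorsionFree (m → n → α))

variable {n : Type*} [Fintype n] [DecidableEq n]

theorem natCast_dvd_iff {α : Type*} [CommSemiring α] {c : ℕ} {N : Matrix n n α} :
    (c : Matrix n n α) ∣ N ↔ ∀ i j, (c : α) ∣ N i j := by
  constructor
  · rintro ⟨M, rfl⟩ i j
    exact ⟨M i j, by rw [← nsmul_eq_mul, smul_apply, nsmul_eq_mul]⟩
  · intro h
    choose M hM using h
    exact ⟨of M, by ext i j; rw [← nsmul_eq_mul, smul_apply, nsmul_eq_mul]; exact hM i j⟩

theorem natCast_dvd_iff_map_eq_zero {q : ℕ} {N : Matrix n n ℤ} :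
    (q : Matrix n n ℤ) ∣ N ↔ N.map (Int.cast : ℤ → ZMod q) = 0 := by
  simp [natCast_dvd_iff, ← Matrix.ext_iff, ZMod.intCast_zmod_eq_zero_iff_dvd]

theorem eq_zero_of_forall_natCast_pow_dvd {q : ℕ} (hq : 1 < q) {N : Matrix n n ℤ}
    (h : ∀ k, (q : Matrix n n ℤ) ^ k ∣ N) : N = 0 := by
  ext i j
  have hk : ∀ k, ((q ^ k : ℕ) : ℤ) ∣ N i j := fun k =>
    natCast_dvd_iff.1 (by simpa using h k) i j
  exact Int.eq_zero_of_dvd_of_natAbs_lt_natAbs (hk (N i j).natAbs)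
    (by simpa using Nat.lt_pow_self hq)

theorem GeneralLinearGroup.eq_one_of_isOfFinOrder_of_map_eq_one {q : ℕ} (hq : q.Prime)
    (hq2 : q ≠ 2) {A : GL n ℤ} (hA : IsOfFinOrder A)
    (hmod : (A : Matrix n n ℤ).map (Int.cast : ℤ → ZMod q) = 1) : A = 1 := by
  refine Units.ext (eq_one_of_isOfFinOrder_of_natCast_dvd_sub_one hq hq2
    (fun _ => eq_zero_of_forall_natCast_pow_dvd hq.one_lt) (Units.isOfFinOrder_val.2 hA) ?_)
  rw [natCast_dvd_iff_map_eq_zero, Matrix.map_sub _ Int.cast_sub, hmod,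
    Matrix.map_one _ Int.cast_zero Int.cast_one, sub_self]

end Matrix

/-- The reduction map modulo 3 is injective on any finite subgroup of `GL_n(ℤ)`:
if `A ∈ GL_n(ℤ)` has finite order and `A ≡ I (mod 3)`, then `A = I`. -/
theorem level_three_congruence_torsion_free
    {n : ℕ} (A : Matrix.GeneralLinearGroup (Fin n) ℤ) (hfin : IsOfFinOrder A)
    (hmod : (A : Matrix (Fin n) (Fin n) ℤ).map (Int.cast : ℤ → ZMod 3) = 1) :
    A = 1 :=
  Matrix.GeneralLinearGroup.eq_one_of_isOfFinOrder_of_map_eq_one Nat.prime_three (by decide)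
    hfin hmod
end

section
/- Let 0 → H₁ → H₂ → H₃ → 0 be a short exact sequence of abelian groups with H₃ finite. Then the induced sequence on non-divisible parts 0 → H₁/H₁^div → H₂/H₂^div → H₃ → 0 is exact, where H^div denotes the maximal divisible subgroup of H. -/
/-- A subgroup `D` of an abelian group is divisible if every element of `D` is an
`n`-th multiple of an element of `D`, for all `n ≥ 1`. -/
def AddSubgroup.IsDivisibleSubgroup {H : Type*} [AddCommGroup H] (D : AddSubgroup H) :
    Prop :=
  ∀ n : ℕ, 0 < n → ∀ x ∈ D, ∃ y ∈ D, n • y = x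

/-- The maximal divisible subgroup of an abelian group: the sum of all of its
divisible subgroups. -/
def maxDivisible (H : Type*) [AddCommGroup H] : AddSubgroup H :=
  sSup {D : AddSubgroup H | D.IsDivisibleSubgroup}

theorem le_maxDivisible {H : Type*} [AddCommGroup H] {D : AddSubgroup H}
    (hD : D.IsDivisibleSubgroup) : D ≤ maxDivisible H := le_sSup hD

theorem maxDivisible_isDivisible (H : Type*) [AddCommGroup H] :
    (maxDivisible H).IsDivisibleSubgroup := by
  intro n hn x hx
  rw [maxDivisible, sSup_eq_iSup'] at hx
  refine AddSubgroup.iSup_induction (C := fun x => ∃ y ∈ maxDivisible H, n • y = x)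
    _ hx ?_ ?_ ?_
  · rintro ⟨D, hD⟩ x hxD
    obtain ⟨y, hy, hny⟩ := hD n hn x hxD
    exact ⟨y, le_maxDivisible hD hy, hny⟩
  · exact ⟨0, zero_mem _, smul_zero n⟩
  · rintro a b ⟨y, hy, rfl⟩ ⟨z, hz, rfl⟩
    exact ⟨y + z, add_mem hy hz, smul_add n y z⟩

/-- Let `0 → H₁ → H₂ → H₃ → 0` be a short exact sequence of abelian groups with `H₃`
finite. Then the induced sequence on non-divisible parts
`0 → H₁/H₁^div → H₂/H₂^div → H₃ → 0` is exact, where `H^div` denotes the maximal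
divisible subgroup of `H`. -/
theorem exact_on_nondivisible_parts
    {H₁ H₂ H₃ : Type*} [AddCommGroup H₁] [AddCommGroup H₂] [AddCommGroup H₃]
    [Finite H₃]
    (f : H₁ →+ H₂) (g : H₂ →+ H₃)
    (hf : Function.Injective f) (hg : Function.Surjective g)
    (hfg : f.range = g.ker)
    (f' : H₁ ⧸ maxDivisible H₁ →+ H₂ ⧸ maxDivisible H₂)
    (g' : H₂ ⧸ maxDivisible H₂ →+ H₃)
    (hf' : ∀ x : H₁, f' (QuotientAddGroup.mk x) = QuotientAddGroup.mk (f x))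
    (hg' : ∀ x : H₂, g' (QuotientAddGroup.mk x) = g x) :
    Function.Injective f' ∧ Function.Surjective g' ∧ f'.range = g'.ker := by
  have hD2 := maxDivisible_isDivisible H₂
  have hNpos : 0 < Nat.card H₃ := Nat.card_pos
  -- the preimage of the maximal divisible subgroup of H₂ under f is divisible
  have hpre : (AddSubgroup.comap f (maxDivisible H₂)).IsDivisibleSubgroup := by
    intro n hn x hx
    obtain ⟨y, hy, hny⟩ := hD2 (n * Nat.card H₃) (Nat.mul_pos hn hNpos) (f x) hx
    have hy' : Nat.card H₃ • y ∈ maxDivisible H₂ := AddSubgroup.nsmul_mem _ hy _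
    have hker : Nat.card H₃ • y ∈ g.ker := by
      have : g (Nat.card H₃ • y) = Nat.card H₃ • g y := map_nsmul g _ y
      simp [AddMonoidHom.mem_ker, this, card_nsmul_eq_zero']
    rw [← hfg] at hker
    obtain ⟨z, hz⟩ := hker
    refine ⟨z, ?_, ?_⟩
    · show f z ∈ maxDivisible H₂
      rw [hz]; exact hy'
    · apply hf
      rw [map_nsmul, hz, smul_smul, hny]
  refine ⟨?_, ?_, ?_⟩
  · -- injectivity
    rw [injective_iff_map_eq_zero]
    intro a ha
    obtain ⟨x, rfl⟩ := QuotientAddGroup.mk_surjective a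
    rw [hf'] at ha
    have hmem : f x ∈ maxDivisible H₂ := (QuotientAddGroup.eq_zero_iff _).mp ha
    exact (QuotientAddGroup.eq_zero_iff _).mpr (le_maxDivisible hpre hmem)
  · -- surjectivity
    intro h
    obtain ⟨x, rfl⟩ := hg h
    exact ⟨QuotientAddGroup.mk x, hg' x⟩
  · -- exactness
    ext a
    constructor
    · rintro ⟨b, rfl⟩
      obtain ⟨x, rfl⟩ := QuotientAddGroup.mk_surjective b
      show g' (f' _) = 0
      rw [hf', hg']
      have : f x ∈ g.ker := hfg ▸ ⟨x, rfl⟩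
      exact this
    · intro ha
      obtain ⟨w, rfl⟩ := QuotientAddGroup.mk_surjective a
      have hgw : w ∈ g.ker := by
        have : g' (QuotientAddGroup.mk w) = 0 := ha
        rwa [hg'] at this
      rw [← hfg] at hgw
      obtain ⟨x, hx⟩ := hgw
      exact ⟨QuotientAddGroup.mk x, by rw [hf', hx]⟩
end
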